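/- arXiv:2404.19058 — 2 statements merged into one kernel-verified Lean document; each statement's English description precedes it below -/
import Mathlib

section
/- Let $G$ be a group and let $\{A_1,\dots,A_p\}$ and $\{B_1,\dots,B_q\}$ be two malnormal collections of subgroups of $G$. Then the collection of all nontrivial subgroups of the form $A_k \cap w B_s w^{-1}$ (for $w \in G$, $1 \le k \le p$, $1 \le s \le q$), taken up to conjugacy, is again malnormal: if $x (A_k \cap w B_s w^{-1}) x^{-1} \cap (A_{k'} \cap w' B_{s'} (w')^{-1}) \neq \{1\}$ then $k = k'$, $s = s'$, $x A_k x^{-1} = A_{k'}$, $x w B_s w^{-1} x^{-1} = w' B_{s'} (w')^{-1}$, and in particular $x \in A_{k}\,$ whenever $k=k'$ and $x A_k x^{-1} \cap A_{k'} \neq \{1\}$. -/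
/-- The conjugate `g H g⁻¹` of a subgroup. -/
def conjSub {G : Type*} [Group G] (g : G) (H : Subgroup G) : Subgroup G :=
  Subgroup.map (MulAut.conj g).toMonoidHom H

/-- A finite collection of subgroups is malnormal if whenever a conjugate of one member meets
another member nontrivially, the indices agree and the conjugator lies in that member. -/
def MalnormalCollection {G : Type*} [Group G] {ι : Type*} (A : ι → Subgroup G) : Prop :=
  ∀ (i j : ι) (x : G), conjSub x (A i) ⊓ A j ≠ ⊥ → i = j ∧ x ∈ A i

/-!
The meet `x (A_k ∩ w B_s w⁻¹) x⁻¹ ∩ (A_k' ∩ w' B_s' w'⁻¹)` lies in both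
`x A_k x⁻¹ ∩ A_k'` and `(x w) B_s (x w)⁻¹ ∩ w' B_s' w'⁻¹`, so both are nontrivial.
Malnormality of `{A_k}` gives `k = k'` and `x ∈ A_k`; malnormality of `{B_s}`, applied after
conjugating by `w'⁻¹`, gives `s = s'` and `w'⁻¹ x w ∈ B_s`, whence the conjugates agree.
-/

section conjSub

variable {G : Type*} [Group G]

@[simp]
lemma mem_conjSub {g y : G} {H : Subgroup G} : y ∈ conjSub g H ↔ g⁻¹ * y * g ∈ H := by
  constructor
  · rintro ⟨h, hh, rfl⟩
    simpa [mul_assoc] using hh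
  · intro h
    exact ⟨g⁻¹ * y * g, h, by simp [mul_assoc]⟩

lemma conjSub_mul (a b : G) (H : Subgroup G) :
    conjSub (a * b) H = conjSub a (conjSub b H) := by
  ext y
  simp only [mem_conjSub, mul_inv_rev, mul_assoc]

lemma conjSub_inf (g : G) (H K : Subgroup G) :
    conjSub g (H ⊓ K) = conjSub g H ⊓ conjSub g K :=
  Subgroup.map_inf H K _ (MulAut.conj g).injective

lemma conjSub_eq_bot_iff {g : G} {H : Subgroup G} : conjSub g H = ⊥ ↔ H = ⊥ :=
  Subgroup.map_eq_bot_iff_of_injective H (MulAut.conj g).injective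

lemma conjSub_of_mem {g : G} {H : Subgroup G} (hg : g ∈ H) : conjSub g H = H := by
  ext y
  rw [mem_conjSub]
  refine ⟨fun h => ?_, fun h => H.mul_mem (H.mul_mem (H.inv_mem hg) h) hg⟩
  simpa [mul_assoc] using H.mul_mem (H.mul_mem hg h) (H.inv_mem hg)

end conjSub

namespace MalnormalCollection

variable {G ι : Type*} [Group G] {A : ι → Subgroup G}

lemma conjSub_eq (hA : MalnormalCollection A) {i j : ι} {x : G}
    (h : conjSub x (A i) ⊓ A j ≠ ⊥) : i = j ∧ conjSub x (A i) = A j := by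
  obtain ⟨rfl, hx⟩ := hA i j x h
  exact ⟨rfl, conjSub_of_mem hx⟩

lemma conjSub_eq_conjSub (hA : MalnormalCollection A) {i j : ι} {u v : G}
    (h : conjSub u (A i) ⊓ conjSub v (A j) ≠ ⊥) :
    i = j ∧ conjSub u (A i) = conjSub v (A j) := by
  have hu : conjSub u (A i) = conjSub v (conjSub (v⁻¹ * u) (A i)) := by
    rw [← conjSub_mul, mul_inv_cancel_left]
  rw [hu, ← conjSub_inf, Ne, conjSub_eq_bot_iff] at h
  obtain ⟨rfl, hij⟩ := hA.conjSub_eq h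
  exact ⟨rfl, by rw [hu, hij]⟩

end MalnormalCollection

theorem stmt_5_general {G : Type*} [Group G] {p q : ℕ}
    (A : Fin p → Subgroup G) (B : Fin q → Subgroup G)
    (hA : MalnormalCollection A) (hB : MalnormalCollection B)
    (k k' : Fin p) (s s' : Fin q) (w w' x : G)
    (hmeet : conjSub x (A k ⊓ conjSub w (B s)) ⊓ (A k' ⊓ conjSub w' (B s')) ≠ ⊥) :
    k = k' ∧ s = s' ∧ conjSub x (A k) = A k' ∧
      conjSub x (conjSub w (B s)) = conjSub w' (B s') ∧
      (k = k' → conjSub x (A k) ⊓ A k' ≠ ⊥ → x ∈ A k) := by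
  rw [conjSub_inf] at hmeet
  have hAmeet : conjSub x (A k) ⊓ A k' ≠ ⊥ :=
    ne_bot_of_le_ne_bot hmeet (inf_le_inf inf_le_left inf_le_left)
  have hBmeet : conjSub (x * w) (B s) ⊓ conjSub w' (B s') ≠ ⊥ := by
    rw [conjSub_mul]
    exact ne_bot_of_le_ne_bot hmeet (inf_le_inf inf_le_right inf_le_right)
  obtain ⟨hk, hAeq⟩ := hA.conjSub_eq hAmeet
  obtain ⟨hs, hBeq⟩ := hB.conjSub_eq_conjSub hBmeet
  rw [conjSub_mul] at hBeq
  exact ⟨hk, hs, hAeq, hBeq, fun _ h => (hA k k' x h).2⟩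

/-- The meet of two malnormal collections of subgroups is again malnormal. -/
theorem stmt_5 {G : Type*} [Group G] {p q : ℕ}
    (A : Fin p → Subgroup G) (B : Fin q → Subgroup G)
    (hA : MalnormalCollection A) (hB : MalnormalCollection B)
    (k k' : Fin p) (s s' : Fin q) (w w' x : G)
    (hne : A k ⊓ conjSub w (B s) ≠ ⊥)
    (hne' : A k' ⊓ conjSub w' (B s') ≠ ⊥)
    (hmeet : conjSub x (A k ⊓ conjSub w (B s)) ⊓ (A k' ⊓ conjSub w' (B s')) ≠ ⊥) :
    k = k' ∧ s = s' ∧ conjSub x (A k) = A k' ∧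
      conjSub x (conjSub w (B s)) = conjSub w' (B s') ∧
      (k = k' → conjSub x (A k) ⊓ A k' ≠ ⊥ → x ∈ A k) :=
  stmt_5_general A B hA hB k k' s s' w w' x hmeet
end

section
/- Let $F_4$ be the free group on $a,b,c,d$ and let $\theta \in \mathrm{Aut}(F_4)$ be defined by $\theta(a) = bd$, $\theta(b) = b$, $\theta(c) = c$, $\theta(d) = b^{-1}ac$. Let $\iota_b \in \mathrm{Aut}(F_4)$ be conjugation by $b$. Then $\theta$ and $\iota_b$ commute, both have infinite order, and the subgroup $\langle \theta, \iota_b \rangle \leq \mathrm{Aut}(F_4)$ is isomorphic to $\mathbb{Z} \times \mathbb{Z}$. -/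
/-!
Since `θ` fixes `b`, it commutes with `ι_b`. Two commuting elements `x`, `y` of a group generate
a copy of `ℤ × ℤ` as soon as `x ^ m * y ^ n = 1` forces `m = n = 0`. A relation
`θ ^ m * ι_b ^ n = 1` makes `ι_b ^ n` fix `c`, as `θ` does, so `b ^ n` commutes with `c` in the
free group, whence `n = 0`; then `θ ^ m = 1`, and `m = 0` because `θ` has infinite order: `θ²`
fixes `c` and sends `a` to `ac`, so `θ ^ (2k)` sends `a` to `a c ^ k`.
-/

open Subgroup

theorem Commute.nonempty_closure_pair_mulEquiv {G : Type*} [Group G] {x y : G}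
    (hxy : Commute x y) (h : ∀ m n : ℤ, x ^ m * y ^ n = 1 → m = 0 ∧ n = 0) :
    Nonempty (closure {x, y} ≃* Multiplicative (ℤ × ℤ)) := by
  let f := (zpowersHom G x).noncommCoprod (zpowersHom G y) fun m n => hxy.zpow_zpow _ _
  have hf : Function.Injective f := by
    rw [injective_iff_map_eq_one]
    rintro ⟨m, n⟩ hmn
    obtain ⟨hm, hn⟩ := h m.toAdd n.toAdd hmn
    exact Prod.ext hm hn
  have hrange : f.range = closure {x, y} := (MonoidHom.noncommCoprod_range _ _ _).trans <| by
    rw [range_zpowersHom, range_zpowersHom, zpowers_eq_closure,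
      zpowers_eq_closure, ← Subgroup.closure_union, Set.singleton_union]
  exact ⟨((MonoidHom.ofInjective hf).trans (MulEquiv.subgroupCongr hrange)).symm.trans
    (MulEquiv.prodMultiplicative ℤ ℤ).symm⟩

namespace FreeGroup

theorem eq_zero_of_commute_of_zpow_of {α : Type*} [DecidableEq α] {x y : α} (hxy : x ≠ y) {n : ℤ}
    (h : Commute (of x ^ n) (of y)) : n = 0 := by
  -- in the infinite dihedral group, `r n * sr 0 = sr (-n)` while `sr 0 * r n = sr n`
  let ρ : FreeGroup α →* DihedralGroup 0 :=
    lift fun z => if z = x then .r 1 else if z = y then .sr 0 else 1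
  have hρ := (h.map ρ).eq
  simp only [ρ, map_zpow, lift_apply_of, if_neg hxy.symm, if_true, DihedralGroup.r_one_zpow,
    DihedralGroup.r_mul_sr, DihedralGroup.sr_mul_r, DihedralGroup.sr.injEq] at hρ
  change (0 : ℤ) - n = 0 + n at hρ -- `ZMod 0` is `ℤ`
  omega

end FreeGroup

namespace MulAut

variable {G : Type*} [Group G]

theorem zpow_apply_eq_self {f : MulAut G} {x : G} (hx : f x = x) (n : ℤ) : (f ^ n) x = x := by
  have hmem : f ∈ MulAction.stabilizer (MulAut G) x := hx
  exact zpow_mem hmem n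

theorem pow_apply_eq_mul_pow {f : MulAut G} {x y : G} (hx : f x = x * y) (hy : f y = y) (n : ℕ) :
    (f ^ n) x = x * y ^ n := by
  induction n with
  | zero => simp
  | succ n ih => rw [pow_succ', mul_apply, ih, map_mul, hx, map_pow, hy, pow_succ', mul_assoc]

theorem not_isOfFinOrder_of_apply_eq_mul {f : MulAut G} {x y : G} (hx : f x = x * y)
    (hy : f y = y) (hy' : ¬IsOfFinOrder y) : ¬IsOfFinOrder f := by
  rw [isOfFinOrder_iff_pow_eq_one] at hy' ⊢
  rintro ⟨n, hn, hfn⟩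
  refine hy' ⟨n, hn, ?_⟩
  simpa [hfn] using (pow_apply_eq_mul_pow hx hy n).symm

theorem commute_conj {f : MulAut G} {g : G} (hg : f g = g) : Commute f (conj g) := by
  ext x
  simp [hg]

end MulAut

/-- In `Aut(F₄)`, the automorphism `θ : a ↦ bd, b ↦ b, c ↦ c, d ↦ b⁻¹ac` commutes with
conjugation by `b`, both have infinite order, and together they generate a subgroup
isomorphic to `ℤ × ℤ`. -/
theorem stmt_10 :
    let a : FreeGroup (Fin 4) := FreeGroup.of 0
    let b : FreeGroup (Fin 4) := FreeGroup.of 1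
    let c : FreeGroup (Fin 4) := FreeGroup.of 2
    let d : FreeGroup (Fin 4) := FreeGroup.of 3
    ∀ θ : MulAut (FreeGroup (Fin 4)),
      θ a = b * d → θ b = b → θ c = c → θ d = b⁻¹ * a * c →
      Commute θ (MulAut.conj b) ∧ ¬ IsOfFinOrder θ ∧ ¬ IsOfFinOrder (MulAut.conj b) ∧
        Nonempty ((Subgroup.closure {θ, MulAut.conj b} : Subgroup (MulAut (FreeGroup (Fin 4))))
          ≃* Multiplicative (ℤ × ℤ)) := by
  intro a b c d θ ha hb hc hd
  have hθ2a : (θ ^ 2) a = a * c := by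
    rw [pow_two, MulAut.mul_apply, ha, map_mul, hb, hd]
    group
  have hθ2 : ¬IsOfFinOrder (θ ^ 2) := MulAut.not_isOfFinOrder_of_apply_eq_mul hθ2a
    (MulAut.zpow_apply_eq_self hc 2) (not_isOfFinOrder_of_isMulTorsionFree (FreeGroup.of_ne_one _))
  have hθ : ¬IsOfFinOrder θ := fun hfin => hθ2 hfin.pow
  have hrel : ∀ m n : ℤ, θ ^ m * MulAut.conj b ^ n = 1 → m = 0 ∧ n = 0 := by
    intro m n h
    have hcn : (MulAut.conj (b ^ n)) c = c := by
      rw [map_zpow, eq_inv_of_mul_eq_one_right h, ← zpow_neg, MulAut.zpow_apply_eq_self hc]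
    rw [MulAut.conj_apply, mul_inv_eq_iff_eq_mul] at hcn
    obtain rfl : n = 0 := FreeGroup.eq_zero_of_commute_of_zpow_of (by decide) hcn
    rw [zpow_zero, mul_one] at h
    exact ⟨injective_zpow_iff_not_isOfFinOrder.2 hθ (h.trans (zpow_zero θ).symm), rfl⟩
  refine ⟨MulAut.commute_conj hb, hθ, fun hfin => ?_,
    (MulAut.commute_conj hb).nonempty_closure_pair_mulEquiv hrel⟩
  obtain ⟨n, hn, hpow⟩ := isOfFinOrder_iff_zpow_eq_one.1 hfin
  exact hn (hrel 0 n (by rw [zpow_zero, one_mul, hpow])).2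
end
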